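/- arXiv:2403.13174 — 4 statements merged into one kernel-verified Lean document; each statement's English description precedes it below -/
import Mathlib

section
/- Let a, b > 0 with b/(4a) > exp(−1). Then g_{a,b}(s) < 0 for every s > 0. -/
/-- The effective ionization rate `g_{a,b}(s) = a * s * exp (-b/s) - s^2/4`. -/
noncomputable def gab (a b s : ℝ) : ℝ := a * s * Real.exp (-b / s) - s ^ 2 / 4

/-- If `b / (4 a) > exp (-1)` then `g_{a,b}(s) < 0` for every `s > 0`. -/
theorem gab_neg_of_large_ratio (a b : ℝ) (ha : 0 < a) (hb : 0 < b)
    (hr : b / (4 * a) > Real.exp (-1)) :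
    ∀ s : ℝ, 0 < s → gab a b s < 0 := by
  intro s hs
  have he1 : (0:ℝ) < Real.exp 1 := Real.exp_pos 1
  have hE : (0:ℝ) < Real.exp (b / s) := Real.exp_pos _
  -- exp(b/s) ≥ (b/s) * e
  have h1 : b / s * Real.exp 1 ≤ Real.exp (b / s) := by
    have h := Real.add_one_le_exp (b / s - 1)
    have h2 : b / s ≤ Real.exp (b / s - 1) := by linarith
    calc b / s * Real.exp 1 ≤ Real.exp (b / s - 1) * Real.exp 1 := by nlinarith
      _ = Real.exp (b / s) := by rw [← Real.exp_add]; ring_nf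
  have hbe : b * Real.exp 1 ≤ s * Real.exp (b / s) := by
    have := mul_le_mul_of_nonneg_left h1 hs.le
    field_simp at this
    nlinarith [this]
  -- hr: 4a < b * e
  have hinv : Real.exp (-1) = (Real.exp 1)⁻¹ := by
    rw [Real.exp_neg]
  have hmul : Real.exp (-1) * Real.exp 1 = 1 := by rw [← Real.exp_add]; norm_num
  have h4a : 4 * a < b * Real.exp 1 := by
    rw [gt_iff_lt, lt_div_iff₀ (by positivity)] at hr
    nlinarith [hr, hmul, he1, Real.exp_pos (-1)]
  have hkey : 4 * a < s * Real.exp (b / s) := lt_of_lt_of_le h4a hbe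
  have hnegE : Real.exp (-b / s) = (Real.exp (b / s))⁻¹ := by
    rw [← Real.exp_neg]; ring_nf
  unfold gab
  rw [hnegE]
  have hEinv : (Real.exp (b / s))⁻¹ * Real.exp (b / s) = 1 := inv_mul_cancel₀ hE.ne'
  have hEinvpos : (0:ℝ) < (Real.exp (b / s))⁻¹ := by positivity
  nlinarith [mul_pos hs hEinvpos, hkey, hEinv]
end

section
/- Let a, b > 0 with b/(4a) < exp(−1). Then there exist real numbers s₁, s₂ with 0 < s₁ < s₂ such that g_{a,b}(s₁) = 0, g_{a,b}(s₂) = 0, g_{a,b}(s) < 0 for all s ∈ (0, s₁) ∪ (s₂, ∞), and g_{a,b}(s) > 0 for all s ∈ (s₁, s₂). -/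
/-!
For `s > 0` write `g_{a,b}(s) = s² / 4 · (exp F(s) - 1)` with `F(s) = log (4a) - log s - b / s`,
so `g` has the sign of `F`. Since `F'(s) = (b - s) / s²`, `F` increases strictly on `(0, b]` and
decreases strictly on `[b, ∞)`; it tends to `-∞` at both ends of `(0, ∞)`, and its maximum
`F(b) = -log (b / (4a)) - 1` is positive exactly when `b / (4a) < exp (-1)`. The intermediate
value theorem then gives one zero of `F` on each side of `b`.
-/

open Real Set Filter Topology

theorem exists_zeros_of_strictMonoOn_strictAntiOn {f : ℝ → ℝ} {l c : ℝ} (hlc : l < c)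
    (hf : ContinuousOn f (Ioi l)) (hmono : StrictMonoOn f (Ioc l c))
    (hanti : StrictAntiOn f (Ici c)) (hpeak : 0 < f c)
    (hleft : Tendsto f (𝓝[>] l) atBot) (hright : Tendsto f atTop atBot) :
    ∃ s₁ s₂ : ℝ, l < s₁ ∧ s₁ < s₂ ∧ f s₁ = 0 ∧ f s₂ = 0 ∧
      (∀ s : ℝ, (l < s ∧ s < s₁) ∨ s₂ < s → f s < 0) ∧
      (∀ s : ℝ, s₁ < s → s < s₂ → 0 < f s) := by
  obtain ⟨x, hfx, hlx, hxc⟩ :=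
    ((hleft.eventually (eventually_lt_atBot 0)).and (Ioo_mem_nhdsGT hlc)).exists
  obtain ⟨y, hfy, hcy⟩ :=
    ((hright.eventually (eventually_lt_atBot 0)).and (eventually_gt_atTop c)).exists
  obtain ⟨s₁, ⟨hxs₁, hs₁c⟩, hs₁⟩ := intermediate_value_Ioo hxc.le
    (hf.mono fun t ht ↦ hlx.trans_le ht.1) ⟨hfx, hpeak⟩
  obtain ⟨s₂, ⟨hcs₂, hs₂y⟩, hs₂⟩ := intermediate_value_Ioo' hcy.le
    (hf.mono fun t ht ↦ hlc.trans_le ht.1) ⟨hfy, hpeak⟩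
  have hls₁ : l < s₁ := hlx.trans hxs₁
  refine ⟨s₁, s₂, hls₁, hs₁c.trans hcs₂, hs₁, hs₂, ?_, ?_⟩
  · rintro s (⟨hls, hss₁⟩ | hs₂s)
    · exact hs₁ ▸ hmono ⟨hls, (hss₁.trans hs₁c).le⟩ ⟨hls₁, hs₁c.le⟩ hss₁
    · exact hs₂ ▸ hanti hcs₂.le (hcs₂.trans hs₂s).le hs₂s
  · intro s hs₁s hss₂
    rcases le_total s c with hsc | hcs
    · exact hs₁ ▸ hmono ⟨hls₁, hs₁c.le⟩ ⟨hls₁.trans hs₁s, hsc⟩ hs₁s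
    · exact hs₂ ▸ hanti hcs (hcs.trans hss₂.le) hss₂

/-- `log (h(s) / (s² / 4))` for the Townsend coefficient `h(s) = a s exp (-b / s)`. -/
noncomputable def gabLogRatio (a b s : ℝ) : ℝ := log (4 * a) - log s - b / s

section gabLogRatio

variable {a b s : ℝ}

theorem gab_eq_mul_exp_gabLogRatio_sub_one (ha : 0 < a) (hs : 0 < s) :
    gab a b s = s ^ 2 / 4 * (exp (gabLogRatio a b s) - 1) := by
  rw [gabLogRatio, exp_sub, exp_sub, exp_log (by positivity), exp_log hs, gab, neg_div, exp_neg]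
  field_simp

theorem gab_pos_iff (ha : 0 < a) (hs : 0 < s) : 0 < gab a b s ↔ 0 < gabLogRatio a b s := by
  rw [gab_eq_mul_exp_gabLogRatio_sub_one ha hs, mul_pos_iff_of_pos_left (by positivity), sub_pos,
    one_lt_exp_iff]

theorem gab_neg_iff (ha : 0 < a) (hs : 0 < s) : gab a b s < 0 ↔ gabLogRatio a b s < 0 := by
  rw [gab_eq_mul_exp_gabLogRatio_sub_one ha hs, ← neg_pos, ← mul_neg,
    mul_pos_iff_of_pos_left (by positivity), neg_pos, sub_neg, exp_lt_one_iff]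

theorem gab_eq_zero_iff (ha : 0 < a) (hs : 0 < s) : gab a b s = 0 ↔ gabLogRatio a b s = 0 := by
  rw [gab_eq_mul_exp_gabLogRatio_sub_one ha hs, mul_eq_zero_iff_left (by positivity), sub_eq_zero,
    exp_eq_one_iff]

theorem hasDerivAt_gabLogRatio (hs : 0 < s) :
    HasDerivAt (gabLogRatio a b) ((b - s) / s ^ 2) s := by
  have h := ((hasDerivAt_log hs.ne').const_sub (log (4 * a))).sub
    ((hasDerivAt_inv hs.ne').const_mul b)
  have hF : gabLogRatio a b = (fun x ↦ log (4 * a) - log x) - fun x ↦ b * x⁻¹ := by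
    funext x
    rw [gabLogRatio, Pi.sub_apply, div_eq_mul_inv]
  rw [hF]
  exact h.congr_deriv (by field_simp; ring)

theorem continuousOn_gabLogRatio : ContinuousOn (gabLogRatio a b) (Ioi 0) :=
  fun _ hs ↦ (hasDerivAt_gabLogRatio hs).continuousAt.continuousWithinAt

theorem strictMonoOn_gabLogRatio : StrictMonoOn (gabLogRatio a b) (Ioc 0 b) := by
  refine strictMonoOn_of_deriv_pos (convex_Ioc 0 b)
    (continuousOn_gabLogRatio.mono Ioc_subset_Ioi_self) fun s hs ↦ ?_
  rw [interior_Ioc] at hs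
  rw [(hasDerivAt_gabLogRatio hs.1).deriv]
  exact div_pos (sub_pos.2 hs.2) (pow_pos hs.1 2)

theorem strictAntiOn_gabLogRatio (hb : 0 < b) : StrictAntiOn (gabLogRatio a b) (Ici b) := by
  refine strictAntiOn_of_deriv_neg (convex_Ici b)
    (continuousOn_gabLogRatio.mono fun s hs ↦ hb.trans_le hs) fun s hs ↦ ?_
  rw [interior_Ici] at hs
  have hs0 : 0 < s := hb.trans hs
  rw [(hasDerivAt_gabLogRatio hs0).deriv]
  exact div_neg_of_neg_of_pos (sub_neg.2 hs) (pow_pos hs0 2)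

theorem gabLogRatio_self_pos_iff (ha : 0 < a) (hb : 0 < b) :
    0 < gabLogRatio a b b ↔ b / (4 * a) < exp (-1) := by
  rw [← log_lt_iff_lt_exp (by positivity), log_div hb.ne' (by positivity), gabLogRatio,
    div_self hb.ne']
  constructor <;> intro h <;> linarith

theorem tendsto_gabLogRatio_atTop (hb : 0 ≤ b) : Tendsto (gabLogRatio a b) atTop atBot := by
  refine tendsto_atBot_mono' _ ?_
    (tendsto_atBot_add_const_left _ (log (4 * a)) (tendsto_neg_atTop_atBot.comp tendsto_log_atTop))
  filter_upwards [eventually_gt_atTop 0] with s hs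
  have : 0 ≤ b / s := div_nonneg hb hs.le
  simp only [gabLogRatio, Function.comp_apply]
  linarith

theorem tendsto_gabLogRatio_nhdsGT_zero (hb : 0 < b) :
    Tendsto (gabLogRatio a b) (𝓝[>] 0) atBot := by
  have hmul_log : Tendsto (fun s ↦ s * log s + b) (𝓝[>] 0) (𝓝 b) := by
    simpa using (continuous_mul_log.tendsto 0).mono_left nhdsWithin_le_nhds |>.add_const b
  have h := tendsto_neg_atTop_atBot.comp (hmul_log.pos_mul_atTop hb tendsto_inv_nhdsGT_zero)
  refine (tendsto_atBot_add_const_left _ (log (4 * a)) h).congr' ?_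
  filter_upwards [self_mem_nhdsWithin] with s (hs : 0 < s)
  simp only [gabLogRatio, Function.comp_apply]
  field_simp
  ring

end gabLogRatio

/-- If `b / (4 a) < exp (-1)` then `g_{a,b}` is positive exactly on a finite
interval `(s₁, s₂)` of positive reals, vanishing at the endpoints and negative
elsewhere on `(0, ∞)`. -/
theorem gab_positive_hump (a b : ℝ) (ha : 0 < a) (hb : 0 < b)
    (hr : b / (4 * a) < Real.exp (-1)) :
    ∃ s₁ s₂ : ℝ, 0 < s₁ ∧ s₁ < s₂ ∧
      gab a b s₁ = 0 ∧ gab a b s₂ = 0 ∧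
      (∀ s : ℝ, (0 < s ∧ s < s₁) ∨ s₂ < s → gab a b s < 0) ∧
      (∀ s : ℝ, s₁ < s → s < s₂ → 0 < gab a b s) := by
  obtain ⟨s₁, s₂, hs₁, hs₁₂, hF₁, hF₂, hneg, hpos⟩ := exists_zeros_of_strictMonoOn_strictAntiOn hb
    continuousOn_gabLogRatio strictMonoOn_gabLogRatio (strictAntiOn_gabLogRatio hb)
    ((gabLogRatio_self_pos_iff ha hb).2 hr) (tendsto_gabLogRatio_nhdsGT_zero hb)
    (tendsto_gabLogRatio_atTop hb.le)
  have hs₂ : 0 < s₂ := hs₁.trans hs₁₂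
  refine ⟨s₁, s₂, hs₁, hs₁₂, (gab_eq_zero_iff ha hs₁).2 hF₁, (gab_eq_zero_iff ha hs₂).2 hF₂,
    fun s hs ↦ ?_, fun s hs₁s hss₂ ↦ ?_⟩
  · have hs0 : 0 < s := hs.elim And.left (hs₂.trans ·)
    exact (gab_neg_iff ha hs0).2 (hneg s hs)
  · exact (gab_pos_iff ha (hs₁.trans hs₁s)).2 (hpos s hs₁s hss₂)
end

section
/- Fix a > 0 and a real R > 1. Then there exists b₀ > 0 such that for every b with 0 < b ≤ b₀ there exist real numbers s₁, s₂ with 0 < s₁ < s₂, s₂ ≥ R·s₁, g_{a,b}(s₁) = 0, g_{a,b}(s₂) = 0, and g_{a,b}(s) > 0 for all s ∈ (s₁, s₂). -/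
/-- Auxiliary function: `gab a b s` has the same sign as `qab a b s` for `s > 0`. -/
noncomputable def qab (a b s : ℝ) : ℝ := Real.log (4 * a) - b / s - Real.log s

lemma gab_factor (a b s : ℝ) :
    gab a b s = s / 4 * (4 * a * Real.exp (-b / s) - s) := by
  unfold gab; ring

lemma qab_eq (a b s : ℝ) (ha : 0 < a) (hs : 0 < s) :
    qab a b s = Real.log (4 * a * Real.exp (-b / s)) - Real.log s := by
  unfold qab
  rw [Real.log_mul (by positivity) (Real.exp_ne_zero _), Real.log_exp]
  ring

lemma qab_pos_iff (a b s : ℝ) (ha : 0 < a) (hs : 0 < s) :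
    0 < qab a b s ↔ 0 < gab a b s := by
  rw [qab_eq a b s ha hs, gab_factor, sub_pos,
    Real.log_lt_log_iff hs (by positivity)]
  constructor
  · intro h; nlinarith
  · intro h; nlinarith

lemma qab_zero_iff (a b s : ℝ) (ha : 0 < a) (hs : 0 < s) :
    qab a b s = 0 ↔ gab a b s = 0 := by
  rw [qab_eq a b s ha hs, gab_factor, sub_eq_zero,
    Real.log_injOn_pos.eq_iff (by simp only [Set.mem_Ioi]; positivity)
      (Set.mem_Ioi.2 hs)]
  constructor
  · intro h; rw [h]; ring
  · intro h
    have hs4 : s / 4 ≠ 0 := by positivity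
    have := (mul_eq_zero.1 h).resolve_left hs4
    linarith

lemma qab_strictMonoOn (a b : ℝ) (hb : 0 < b) :
    StrictMonoOn (qab a b) (Set.Ioc 0 b) := by
  intro s hs t ht hst
  obtain ⟨hs0, hsb⟩ := hs
  obtain ⟨ht0, htb⟩ := ht
  unfold qab
  have hne : t / s ≠ 1 := by
    intro h
    rw [div_eq_one_iff_eq hs0.ne'] at h
    exact hst.ne' h
  have h1 : Real.log (t / s) < t / s - 1 :=
    Real.log_lt_sub_one_of_pos (by positivity) hne
  rw [Real.log_div ht0.ne' hs0.ne'] at h1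
  have hts : t / s - 1 = (t - s) / s := by field_simp
  rw [hts] at h1
  have h2 : (t - s) / s ≤ b / s - b / t := by
    rw [div_sub_div _ _ hs0.ne' ht0.ne', div_le_div_iff₀ hs0 (by positivity)]
    nlinarith [mul_nonneg (mul_nonneg hs0.le (sub_nonneg.2 hst.le))
      (sub_nonneg.2 htb)]
  linarith

lemma qab_strictAntiOn (a b : ℝ) (hb : 0 < b) :
    StrictAntiOn (qab a b) (Set.Ici b) := by
  intro s hs t ht hst
  have hs0 : 0 < s := lt_of_lt_of_le hb hs
  have ht0 : 0 < t := hs0.trans hst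
  unfold qab
  have hne : s / t ≠ 1 := by
    intro h
    rw [div_eq_one_iff_eq ht0.ne'] at h
    exact hst.ne h
  have h1 : Real.log (s / t) < s / t - 1 :=
    Real.log_lt_sub_one_of_pos (by positivity) hne
  rw [Real.log_div hs0.ne' ht0.ne'] at h1
  have hts : s / t - 1 = (s - t) / t := by field_simp
  rw [hts] at h1
  have h2 : b / s - b / t ≤ (t - s) / t := by
    rw [div_sub_div _ _ hs0.ne' ht0.ne', div_le_div_iff₀ (by positivity) ht0]
    nlinarith [mul_nonneg (mul_nonneg ht0.le (sub_nonneg.2 hst.le))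
      (sub_nonneg.2 (Set.mem_Ici.1 hs))]
  have h3 : (s - t) / t = -((t - s) / t) := by ring
  rw [h3] at h1
  linarith

lemma qab_continuousOn (a b : ℝ) : ContinuousOn (qab a b) (Set.Ioi 0) := by
  intro s hs
  have hs0 : s ≠ 0 := ne_of_gt hs
  exact ((continuousAt_const.sub
    (continuousAt_const.div continuousAt_id hs0)).sub
    (Real.continuousAt_log hs0)).continuousWithinAt

set_option maxHeartbeats 1000000 in
/-- For fixed `a > 0` and any ratio `R > 1`, if `b` is small enough then
`g_{a,b}` has two positive zeros `s₁ < s₂` with `s₂ ≥ R * s₁`, and `g_{a,b}`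
is positive on `(s₁, s₂)`: the positive hump is wide. -/
theorem gab_wide_hump (a R : ℝ) (ha : 0 < a) (hR : 1 < R) :
    ∃ b₀ : ℝ, 0 < b₀ ∧ ∀ b : ℝ, 0 < b → b ≤ b₀ →
      ∃ s₁ s₂ : ℝ, 0 < s₁ ∧ s₁ < s₂ ∧ R * s₁ ≤ s₂ ∧
        gab a b s₁ = 0 ∧ gab a b s₂ = 0 ∧
        ∀ s : ℝ, s₁ < s → s < s₂ → 0 < gab a b s := by
  have hlog2 : 0 < Real.log 2 := Real.log_pos one_lt_two
  have hR0 : 0 < R := lt_trans one_pos hR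
  have he1 : (1 : ℝ) < Real.exp 1 := by
    have := Real.exp_one_gt_d9; linarith
  refine ⟨min 1 (min (2 * a / R) (min (a * Real.log 2) (2 * a / Real.exp 1))),
    by positivity, ?_⟩
  intro b hb hble
  have hb1 : b ≤ 1 := le_trans hble (min_le_left _ _)
  have hbR : b ≤ 2 * a / R :=
    le_trans hble (le_trans (min_le_right _ _) (min_le_left _ _))
  have hbl : b ≤ a * Real.log 2 :=
    le_trans hble (le_trans (min_le_right _ _)
      (le_trans (min_le_right _ _) (min_le_left _ _)))
  have hbe : b ≤ 2 * a / Real.exp 1 :=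
    le_trans hble (le_trans (min_le_right _ _)
      (le_trans (min_le_right _ _) (min_le_right _ _)))
  -- b < 2a
  have hb2a : b < 2 * a :=
    lt_of_le_of_lt hbe (div_lt_self (by positivity) he1)
  -- the small negative point
  set C : ℝ := max (Real.log (4 * a)) 0 + 1 with hCdef
  have hC1 : 1 ≤ C := by
    have := le_max_right (Real.log (4 * a)) 0; simp only [hCdef]; linarith
  have hCl : Real.log (4 * a) ≤ C - 1 := by
    have := le_max_left (Real.log (4 * a)) 0; simp only [hCdef]; linarith
  set slow : ℝ := b ^ 2 / (C + 2) ^ 2 with hslowdef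
  have hslow0 : 0 < slow := by positivity
  have hslowb : slow < b := by
    rw [hslowdef, div_lt_iff₀ (by positivity)]
    have h9 : (9:ℝ) ≤ (C + 2) ^ 2 := by nlinarith
    nlinarith [mul_le_mul_of_nonneg_left h9 hb.le]
  -- q(slow) < 0
  have hqslow : qab a b slow < 0 := by
    unfold qab
    have hlogslow : Real.log slow = 2 * Real.log b - 2 * Real.log (C + 2) := by
      rw [hslowdef, Real.log_div (by positivity) (by positivity),
        Real.log_pow, Real.log_pow]
      push_cast; ring
    have hbdiv : b / slow = (C + 2) ^ 2 / b := by
      rw [hslowdef]; field_simp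
    rw [hlogslow, hbdiv]
    have h1 : -Real.log b ≤ b⁻¹ - 1 := by
      have := Real.log_le_sub_one_of_pos (show (0:ℝ) < b⁻¹ by positivity)
      rwa [Real.log_inv] at this
    have h2 : Real.log (C + 2) ≤ C + 1 := by
      have := Real.log_le_sub_one_of_pos (show (0:ℝ) < C + 2 by positivity)
      linarith
    have key : (2 - (C + 2) ^ 2) / b ≤ 2 - (C + 2) ^ 2 := by
      rw [div_le_iff₀ hb]
      nlinarith [mul_nonneg (by nlinarith : (0:ℝ) ≤ (C + 2) ^ 2 - 2)
        (by linarith : (0:ℝ) ≤ 1 - b)]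
    have hsplit : -((C + 2) ^ 2 / b) + 2 / b = (2 - (C + 2) ^ 2) / b := by
      ring
    have h1' : -(2 * Real.log b) ≤ 2 / b - 2 := by
      have : b⁻¹ = 1 / b := by rw [inv_eq_one_div]
      rw [this] at h1
      have := h1
      linarith [h1, (by ring_nf : 2 * (1 / b) = 2 / b)]
    nlinarith [h1', h2, hCl, key, hsplit]
  -- q(b) > 0
  have hqb : 0 < qab a b b := by
    unfold qab
    rw [div_self hb.ne']
    have hlt : b < 4 * a / Real.exp 1 := by
      refine lt_of_le_of_lt hbe ?_
      rw [div_lt_div_iff₀ (Real.exp_pos 1) (Real.exp_pos 1)]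
      nlinarith [Real.exp_pos 1]
    have hlog : Real.log b < Real.log (4 * a / Real.exp 1) :=
      Real.log_lt_log hb hlt
    rw [Real.log_div (by positivity) (Real.exp_ne_zero 1), Real.log_exp] at hlog
    linarith
  -- q(2a) > 0
  have hq2a : 0 < qab a b (2 * a) := by
    unfold qab
    have hsplit : Real.log (4 * a) = Real.log 2 + Real.log (2 * a) := by
      rw [show (4 : ℝ) * a = 2 * (2 * a) by ring,
        Real.log_mul two_ne_zero (by positivity)]
    rw [hsplit]
    have : b / (2 * a) < Real.log 2 := by
      rw [div_lt_iff₀ (by positivity)]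
      nlinarith [mul_pos ha hlog2]
    linarith
  -- q(4a+1) < 0
  have hqneg : qab a b (4 * a + 1) < 0 := by
    unfold qab
    have hlog : Real.log (4 * a) < Real.log (4 * a + 1) :=
      Real.log_lt_log (by positivity) (by linarith)
    have : 0 < b / (4 * a + 1) := by positivity
    linarith
  -- IVT on [slow, b]
  have hsub1 : Set.Icc slow b ⊆ Set.Ioi 0 := fun x hx =>
    lt_of_lt_of_le hslow0 hx.1
  obtain ⟨s₁, hs₁mem, hs₁q⟩ :=
    intermediate_value_Ioo hslowb.le ((qab_continuousOn a b).mono hsub1)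
      (Set.mem_Ioo.2 ⟨hqslow, hqb⟩)
  -- IVT on [2a, 4a+1]
  have hsub2 : Set.Icc (2 * a) (4 * a + 1) ⊆ Set.Ioi 0 := fun x hx =>
    lt_of_lt_of_le (by positivity) hx.1
  obtain ⟨s₂, hs₂mem, hs₂q⟩ :=
    intermediate_value_Ioo' (by linarith : 2 * a ≤ 4 * a + 1)
      ((qab_continuousOn a b).mono hsub2)
      (Set.mem_Ioo.2 ⟨hqneg, hq2a⟩)
  obtain ⟨hs₁lo, hs₁hi⟩ := hs₁mem
  obtain ⟨hs₂lo, hs₂hi⟩ := hs₂mem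
  have hs₁0 : 0 < s₁ := lt_trans hslow0 hs₁lo
  have hs₂0 : 0 < s₂ := lt_trans (by positivity) hs₂lo
  have hs₁s₂ : s₁ < s₂ := by linarith
  have hRb : R * b ≤ 2 * a := by
    rw [le_div_iff₀ hR0] at hbR
    linarith [mul_comm R b]
  refine ⟨s₁, s₂, hs₁0, hs₁s₂, ?_, (qab_zero_iff a b s₁ ha hs₁0).1 hs₁q,
    (qab_zero_iff a b s₂ ha hs₂0).1 hs₂q, ?_⟩
  · have : R * s₁ ≤ R * b := by nlinarith
    linarith
  · intro s hlt1 hlt2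
    have hs0 : 0 < s := lt_trans hs₁0 hlt1
    rw [← qab_pos_iff a b s ha hs0]
    rcases le_total s b with hsb | hbs
    · have := qab_strictMonoOn a b hb ⟨hs₁0, hs₁hi.le⟩ ⟨hs0, hsb⟩ hlt1
      linarith [hs₁q ▸ this]
    · have hs₂b : s₂ ∈ Set.Ici b := Set.mem_Ici.2 (by linarith)
      have := qab_strictAntiOn a b hb (Set.mem_Ici.2 hbs) hs₂b hlt2
      linarith [hs₂q ▸ this]
end

section
/- Let α < β be reals, let b > 0 and C ≥ 0, and let f : ℝ → ℝ be continuous on [α, β] with f(α) = 0 and f(r) ≥ 0 for all r ∈ [α, β]. Define E : ℝ → ℝ by E(x) = exp(−b/x) if x > 0 and E(x) = 0 if x ≤ 0. Suppose that for every r ∈ [α, β], f(r)² ≤ C · ∫_α^r ( ∫_α^t E(f(τ)) dτ ) dt. Then f(r) = 0 for all r ∈ [α, β]. -/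
/-!
If `f (r) > 0`, then every level `v ∈ (0, f r]` is reached at a first point `s`, before which
`f ≤ v`. Since `E` is monotone, the double integral up to `s` is at most `(β - α)² E(v)`, so
`v² ≤ C (β - α)² E(v) ≤ 6 C (β - α)² v³ / b³`, i.e. `b³ ≤ 6 C (β - α)² v`. Letting `v → 0⁺`
contradicts `b > 0`: `E` vanishes at `0` faster than `v²`.
-/

open Set Filter Topology

/-- The function `E` of the statement. -/
noncomputable def expNegDiv (b x : ℝ) : ℝ :=
  if 0 < x then Real.exp (-b / x) else 0

lemma expNegDiv_nonneg (b x : ℝ) : 0 ≤ expNegDiv b x := by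
  unfold expNegDiv
  split_ifs
  exacts [(Real.exp_pos _).le, le_rfl]

lemma expNegDiv_monotone {b : ℝ} (hb : 0 ≤ b) : Monotone (expNegDiv b) := by
  intro x y hxy
  by_cases hx : 0 < x
  · have hy : 0 < y := hx.trans_le hxy
    simp only [expNegDiv, if_pos hx, if_pos hy, Real.exp_le_exp, neg_div, neg_le_neg_iff]
    exact div_le_div_of_nonneg_left hb hx hxy
  · simpa only [expNegDiv, if_neg hx] using expNegDiv_nonneg b y

lemma expNegDiv_le {b x : ℝ} (hb : 0 < b) (hx : 0 ≤ x) :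
    expNegDiv b x ≤ 6 * x ^ 3 / b ^ 3 := by
  rcases hx.eq_or_lt with rfl | hx
  · simp [expNegDiv]
  have hcube : (b / x) ^ 3 / 6 ≤ Real.exp (b / x) := by
    simpa [Nat.factorial] using Real.pow_div_factorial_le_exp (b / x) (by positivity) 3
  calc expNegDiv b x = (Real.exp (b / x))⁻¹ := by
        rw [expNegDiv, if_pos hx, neg_div, Real.exp_neg]
    _ ≤ ((b / x) ^ 3 / 6)⁻¹ := inv_anti₀ (by positivity) hcube
    _ = 6 * x ^ 3 / b ^ 3 := by field_simp

lemma ContinuousOn.exists_eq_and_forall_le_of_mem_Icc {f : ℝ → ℝ} {a b v : ℝ} (hab : a ≤ b)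
    (hf : ContinuousOn f (Icc a b)) (hv : v ∈ Icc (f a) (f b)) :
    ∃ s ∈ Icc a b, f s = v ∧ ∀ x ∈ Icc a s, f x ≤ v := by
  set S := Icc a b ∩ f ⁻¹' {v}
  have hS_closed : IsClosed S :=
    hf.preimage_isClosed_of_isClosed isClosed_Icc isClosed_singleton
  have hS_bdd : BddBelow S := ⟨a, fun x hx => hx.1.1⟩
  have hS_ne : S.Nonempty := intermediate_value_Icc hab hf hv
  obtain ⟨hs, hfs⟩ : sInf S ∈ S := hS_closed.csInf_mem hS_ne hS_bdd
  refine ⟨sInf S, hs, hfs, fun x hx => ?_⟩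
  by_contra! hvx
  have hxb : x ≤ b := hx.2.trans hs.2
  obtain ⟨σ, hσ, hfσ⟩ := intermediate_value_Icc hx.1 (hf.mono (Icc_subset_Icc_right hxb))
    ⟨hv.1, hvx.le⟩
  have hsσ : sInf S ≤ σ := csInf_le hS_bdd ⟨⟨hσ.1, hσ.2.trans hxb⟩, hfσ⟩
  have hxs : x = sInf S := le_antisymm hx.2 (hsσ.trans hσ.2)
  exact hvx.ne' (hxs ▸ hfs)

lemma norm_integral_integral_le_of_norm_le_const {g : ℝ → ℝ} {a s K : ℝ} (has : a ≤ s)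
    (hg : ∀ τ ∈ Ioc a s, ‖g τ‖ ≤ K) :
    ‖∫ t in a..s, ∫ τ in a..t, g τ‖ ≤ K * (s - a) ^ 2 := by
  have hinner : ∀ t ∈ uIoc a s, ‖∫ τ in a..t, g τ‖ ≤ K * (s - a) := by
    intro t ht
    rw [uIoc_of_le has] at ht
    have hK : 0 ≤ K := (norm_nonneg _).trans (hg t ht)
    calc ‖∫ τ in a..t, g τ‖ ≤ K * |t - a| :=
          intervalIntegral.norm_integral_le_of_norm_le_const fun τ hτ => by
            rw [uIoc_of_le ht.1.le] at hτ
            exact hg τ ⟨hτ.1, hτ.2.trans ht.2⟩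
      _ ≤ K * (s - a) := by
          rw [abs_of_nonneg (by linarith [ht.1])]
          exact mul_le_mul_of_nonneg_left (by linarith [ht.2]) hK
  calc ‖∫ t in a..s, ∫ τ in a..t, g τ‖ ≤ K * (s - a) * |s - a| :=
        intervalIntegral.norm_integral_le_of_norm_le_const hinner
    _ = K * (s - a) ^ 2 := by rw [abs_of_nonneg (sub_nonneg.mpr has)]; ring

lemma sq_le_mul_of_le_integral_integral {E f : ℝ → ℝ} {α β C r v : ℝ} (hE0 : ∀ x, 0 ≤ E x)
    (hE : Monotone E) (hC : 0 ≤ C) (hf : ContinuousOn f (Icc α β)) (hfα : f α = 0)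
    (hineq : ∀ x ∈ Icc α β, f x ^ 2 ≤ C * ∫ t in α..x, ∫ τ in α..t, E (f τ))
    (hr : r ∈ Icc α β) (hv : 0 ≤ v) (hvr : v ≤ f r) :
    v ^ 2 ≤ C * (E v * (β - α) ^ 2) := by
  obtain ⟨s, hs, hfs, hle⟩ := (hf.mono (Icc_subset_Icc_right hr.2))
    |>.exists_eq_and_forall_le_of_mem_Icc hr.1 ⟨hfα ▸ hv, hvr⟩
  have hsβ : s ∈ Icc α β := ⟨hs.1, hs.2.trans hr.2⟩
  have hbound : ∀ τ ∈ Ioc α s, ‖E (f τ)‖ ≤ E v := fun τ hτ => by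
    rw [Real.norm_of_nonneg (hE0 _)]
    exact hE (hle τ ⟨hτ.1.le, hτ.2⟩)
  have hdouble :=
    (le_abs_self _).trans (norm_integral_integral_le_of_norm_le_const hs.1 hbound)
  calc v ^ 2 = f s ^ 2 := by rw [hfs]
    _ ≤ C * (E v * (s - α) ^ 2) := (hineq s hsβ).trans (mul_le_mul_of_nonneg_left hdouble hC)
    _ ≤ C * (E v * (β - α) ^ 2) := by
      have := hE0 v
      gcongr
      · linarith [hs.1]
      · exact hsβ.2

theorem osgood_vanishing_general (α β b C : ℝ) (hb : 0 < b) (hC : 0 ≤ C)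
    (f : ℝ → ℝ) (hf : ContinuousOn f (Set.Icc α β)) (hfα : f α = 0)
    (hf0 : ∀ r ∈ Set.Icc α β, 0 ≤ f r)
    (E : ℝ → ℝ) (hE : ∀ x : ℝ, E x = if 0 < x then Real.exp (-b / x) else 0)
    (hineq : ∀ r ∈ Set.Icc α β,
      (f r) ^ 2 ≤ C * ∫ t in α..r, (∫ τ in α..t, E (f τ))) :
    ∀ r ∈ Set.Icc α β, f r = 0 := by
  obtain rfl : E = expNegDiv b := funext hE
  intro r hr
  by_contra hne
  have hfr : 0 < f r := (hf0 r hr).lt_of_ne' hne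
  set K := 6 * C * (β - α) ^ 2
  have hlevel : ∀ v ∈ Ioc 0 (f r), b ^ 3 ≤ K * v := by
    rintro v ⟨hv, hvr⟩
    have hv2 : v ^ 2 ≤ C * (6 * v ^ 3 / b ^ 3 * (β - α) ^ 2) :=
      (sq_le_mul_of_le_integral_integral (expNegDiv_nonneg b) (expNegDiv_monotone hb.le) hC hf hfα
        hineq hr hv.le hvr).trans (by gcongr; exact expNegDiv_le hb hv.le)
    have hv2' : v ^ 2 * b ^ 3 ≤ v ^ 2 * (K * v) := by
      rw [← le_div_iff₀ (by positivity)]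
      exact hv2.trans_eq (by ring)
    exact le_of_mul_le_mul_left hv2' (pow_pos hv 2)
  have hlim : Tendsto (K * ·) (𝓝[>] 0) (𝓝 0) := by
    simpa using (tendsto_id.const_mul K).mono_left (nhdsWithin_le_nhds (a := (0 : ℝ)))
  exact (pow_pos hb 3).not_ge <| ge_of_tendsto hlim (eventually_of_mem (Ioc_mem_nhdsGT hfr) hlevel)

/-- Osgood-type vanishing lemma: if a nonnegative continuous function `f` on
`[α, β]` vanishes at `α` and satisfies
`f(r)² ≤ C ∫_α^r ∫_α^t E(f(τ)) dτ dt`, where `E(x) = exp (-b/x)` for `x > 0`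
and `E(x) = 0` for `x ≤ 0` (with `b > 0`), then `f ≡ 0` on `[α, β]`. -/
theorem osgood_vanishing (α β b C : ℝ) (hαβ : α < β) (hb : 0 < b) (hC : 0 ≤ C)
    (f : ℝ → ℝ) (hf : ContinuousOn f (Set.Icc α β)) (hfα : f α = 0)
    (hf0 : ∀ r ∈ Set.Icc α β, 0 ≤ f r)
    (E : ℝ → ℝ) (hE : ∀ x : ℝ, E x = if 0 < x then Real.exp (-b / x) else 0)
    (hineq : ∀ r ∈ Set.Icc α β,
      (f r) ^ 2 ≤ C * ∫ t in α..r, (∫ τ in α..t, E (f τ))) :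
    ∀ r ∈ Set.Icc α β, f r = 0 :=
  osgood_vanishing_general α β b C hb hC f hf hfα hf0 E hE hineq
end
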